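/- There exist constants C₁, C₂ > 0, depending only on Φ and M, such that for all ρ ∈ F_M^r: H_C^r(ρ) ≥ ∫ Φ(ρ) dx − C₁ − C₂ (∫ Φ(ρ) dx)^{n/3}. In particular, since n < 3, the infimum h_M^r := inf_{ρ ∈ F_M^r} H_C^r(ρ) is finite (h_M^r > −∞). -/

import Mathlib

open MeasureTheory Real Filter Topology

noncomputable section

abbrev Space : Type := EuclideanSpace ℝ (Fin 3)

/-- Induced gravitational potential `U_ρ = -ρ ∗ 1/|·|`. -/
def Upot (ρ : Space → ℝ) : Space → ℝ := fun x => - ∫ y : Space, ρ y / ‖x - y‖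

/-- Induced gravitational field `∇U_ρ`. -/
def gradU (ρ : Space → ℝ) : Space → Space := fun x => gradient (Upot ρ) x

/-- Potential energy. -/
def Epot (ρ : Space → ℝ) : ℝ :=
  -(1/2) * ∫ x : Space, ∫ y : Space, ρ x * ρ y / ‖x - y‖

/-- The reduced energy-Casimir functional `H_C^r(ρ) = ∫ Φ(ρ) + E_pot(ρ)`. -/
def HCr (Φ : ℝ → ℝ) (ρ : Space → ℝ) : ℝ := (∫ x : Space, Φ (ρ x)) + Epot ρ

/-- The reduced constraint set `F_M^r = {ρ ∈ L¹₊ : ∫ Φ(ρ) < ∞, ∫ ρ = M}`. -/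
def FMr (Φ : ℝ → ℝ) (M : ℝ) : Set (Space → ℝ) :=
  {ρ | (∀ x, 0 ≤ ρ x) ∧ Integrable ρ ∧
       Integrable (fun x => Φ (ρ x)) ∧ (∫ x : Space, ρ x) = M}

/-- The infimum `h_M^r` of `H_C^r` over `F_M^r`. -/
def hMr (Φ : ℝ → ℝ) (M : ℝ) : ℝ := sInf (HCr Φ '' FMr Φ M)

/-- Assumptions on `Φ`: `Φ ∈ C¹([0,∞))` with derivative `Φ'`, `Φ(0) = Φ'(0) = 0`,
strictly convex, `Φ(r) ≥ C r^{1+1/n}` for large `r` with `0 < n < 3`, and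
`Φ(r) ≤ C r^{1+1/n'}` for small `r` with `0 < n' < 3`. -/
structure PhiHyp (Φ Φ' : ℝ → ℝ) (n n' : ℝ) : Prop where
  n_pos : 0 < n
  n_lt_three : n < 3
  n'_pos : 0 < n'
  n'_lt_three : n' < 3
  hasDeriv : ∀ r ∈ Set.Ici (0:ℝ), HasDerivWithinAt Φ (Φ' r) (Set.Ici 0) r
  contDeriv : ContinuousOn Φ' (Set.Ici 0)
  zero : Φ 0 = 0
  derivZero : Φ' 0 = 0
  strictConvex : StrictConvexOn ℝ (Set.Ici 0) Φ
  growth : ∃ C > (0:ℝ), ∃ r₁ : ℝ, ∀ r : ℝ, r₁ ≤ r → C * r ^ (1 + 1/n) ≤ Φ r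
  small : ∃ C > (0:ℝ), ∃ r₁ > (0:ℝ), ∀ r : ℝ, 0 ≤ r → r ≤ r₁ → Φ r ≤ C * r ^ (1 + 1/n')

/-!
Split the Newton kernel at a radius `R`: `1/|z| ≤ 1_{|z|<R}/|z| + 1/R`. The far part contributes
at most `M²/R`. The near part is bounded by Young's inequality for `∬ f(x) f(y) K(x - y)`, using
`‖1_{B_R}/|·|‖_r = c R^{3/r - 1}` for `r < 3` and `∫ ρ^{1+1/n} ≤ a M + b ∫ Φ(ρ)`, which is where
the growth of `Φ` enters. The choice `R = (1 + ∫ Φ(ρ))^{-n/3}` balances the two parts and gives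
`∬ ρ(x)ρ(y)/|x-y| ≤ C (1 + (∫ Φ(ρ))^{n/3})`; as `n/3 < 1`, `s - C s^{n/3}` is bounded below.
-/

open Metric Module
open scoped ENNReal

theorem ENNReal.mul_rpow_mul_rpow_mul_rpow (x y z : ℝ≥0∞) {a b c : ℝ} (ha : 0 ≤ a) (hb : 0 ≤ b)
    (hc : 0 ≤ c) :
    (x * z) ^ a * (y * z) ^ b * (x * y) ^ c = x ^ (a + c) * y ^ (b + c) * z ^ (a + b) := by
  rw [ENNReal.mul_rpow_of_nonneg _ _ ha, ENNReal.mul_rpow_of_nonneg _ _ hb,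
    ENNReal.mul_rpow_of_nonneg _ _ hc, ENNReal.rpow_add_of_nonneg _ _ ha hc,
    ENNReal.rpow_add_of_nonneg _ _ hb hc, ENNReal.rpow_add_of_nonneg _ _ ha hb]
  ring

section Young

variable {G : Type*} [AddCommGroup G] [MeasurableSpace G] [MeasurableAdd₂ G] [MeasurableNeg G]
  {μ : Measure G} [SFinite μ] [μ.IsAddLeftInvariant]

theorem lintegral_prod_mul_comp_sub_snd {g K : G → ℝ≥0∞} (hg : AEMeasurable g μ)
    (hK : Measurable K) :
    ∫⁻ z, g z.2 * K (z.1 - z.2) ∂μ.prod μ = (∫⁻ y, g y ∂μ) * ∫⁻ z, K z ∂μ := by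
  rw [lintegral_prod_symm (fun z : G × G => g z.2 * K (z.1 - z.2)) (by fun_prop),
    ← lintegral_mul_const'' _ hg]
  refine lintegral_congr fun y => ?_
  simp only
  rw [lintegral_const_mul _ (by fun_prop), lintegral_sub_right_eq_self K]

variable [μ.IsNegInvariant]

theorem lintegral_prod_mul_comp_sub_fst {f K : G → ℝ≥0∞} (hf : AEMeasurable f μ)
    (hK : Measurable K) :
    ∫⁻ z, f z.1 * K (z.1 - z.2) ∂μ.prod μ = (∫⁻ x, f x ∂μ) * ∫⁻ z, K z ∂μ := by
  rw [lintegral_prod (fun z : G × G => f z.1 * K (z.1 - z.2)) (by fun_prop),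
    ← lintegral_mul_const'' _ hf]
  refine lintegral_congr fun x => ?_
  simp only
  rw [lintegral_const_mul _ (by fun_prop), lintegral_sub_left_eq_self K]

theorem lintegral_lintegral_mul_mul_sub_le {f g K : G → ℝ≥0∞} (hf : AEMeasurable f μ)
    (hg : AEMeasurable g μ) (hK : Measurable K) {p q r : ℝ} (hp : 1 ≤ p) (hq : 1 ≤ q)
    (hr : 1 ≤ r) (hpqr : p⁻¹ + q⁻¹ + r⁻¹ = 2) :
    ∫⁻ x, ∫⁻ y, f x * g y * K (x - y) ∂μ ∂μ ≤
      (∫⁻ x, f x ^ p ∂μ) ^ p⁻¹ * (∫⁻ y, g y ^ q ∂μ) ^ q⁻¹ * (∫⁻ z, K z ^ r ∂μ) ^ r⁻¹ := by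
  have hp' : p⁻¹ ≤ 1 := inv_le_one_of_one_le₀ hp
  have hq' : q⁻¹ ≤ 1 := inv_le_one_of_one_le₀ hq
  have hr' : r⁻¹ ≤ 1 := inv_le_one_of_one_le₀ hr
  have hK₂ : Measurable fun z : G × G => K (z.1 - z.2) := hK.comp measurable_sub
  let u : Fin 3 → G × G → ℝ≥0∞ := ![fun z => f z.1 ^ p * K (z.1 - z.2) ^ r,
    fun z => g z.2 ^ q * K (z.1 - z.2) ^ r, fun z => f z.1 ^ p * g z.2 ^ q]
  let e : Fin 3 → ℝ := ![1 - q⁻¹, 1 - p⁻¹, 1 - r⁻¹]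
  have hu : ∀ i ∈ Finset.univ, AEMeasurable (u i) (μ.prod μ) := by
    intro i _
    fin_cases i
    · exact (hf.comp_fst.pow_const _).mul (hK₂.pow_const _).aemeasurable
    · exact (hg.comp_snd.pow_const _).mul (hK₂.pow_const _).aemeasurable
    · exact (hf.comp_fst.pow_const _).mul (hg.comp_snd.pow_const _)
  have he : ∑ i, e i = 1 := by simp [e, Fin.sum_univ_three]; linarith
  have he₀ : ∀ i ∈ Finset.univ, 0 ≤ e i := by
    intro i _
    fin_cases i <;> simp [e] <;> assumption
  have hpt : ∀ z : G × G, f z.1 * g z.2 * K (z.1 - z.2) = ∏ i, u i z ^ e i := by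
    intro z
    have h₁ : p * (1 - q⁻¹ + (1 - r⁻¹)) = 1 := by
      rw [show 1 - q⁻¹ + (1 - r⁻¹) = p⁻¹ by linarith, mul_inv_cancel₀ (by positivity)]
    have h₂ : q * (1 - p⁻¹ + (1 - r⁻¹)) = 1 := by
      rw [show 1 - p⁻¹ + (1 - r⁻¹) = q⁻¹ by linarith, mul_inv_cancel₀ (by positivity)]
    have h₃ : r * (1 - q⁻¹ + (1 - p⁻¹)) = 1 := by
      rw [show 1 - q⁻¹ + (1 - p⁻¹) = r⁻¹ by linarith, mul_inv_cancel₀ (by positivity)]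
    simp only [Fin.prod_univ_three, u, e, Matrix.cons_val_zero, Matrix.cons_val_one,
      Matrix.cons_val_two, Matrix.tail_cons, Matrix.head_cons]
    rw [ENNReal.mul_rpow_mul_rpow_mul_rpow _ _ _ (by linarith) (by linarith) (by linarith),
      ← ENNReal.rpow_mul, ← ENNReal.rpow_mul, ← ENNReal.rpow_mul, h₁, h₂, h₃]
    simp only [ENNReal.rpow_one]
  have hu₀ : ∫⁻ z, u 0 z ∂μ.prod μ = (∫⁻ x, f x ^ p ∂μ) * ∫⁻ z, K z ^ r ∂μ :=
    lintegral_prod_mul_comp_sub_fst (hf.pow_const _) (hK.pow_const _)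
  have hu₁ : ∫⁻ z, u 1 z ∂μ.prod μ = (∫⁻ y, g y ^ q ∂μ) * ∫⁻ z, K z ^ r ∂μ :=
    lintegral_prod_mul_comp_sub_snd (hg.pow_const _) (hK.pow_const _)
  have hu₂ : ∫⁻ z, u 2 z ∂μ.prod μ = (∫⁻ x, f x ^ p ∂μ) * ∫⁻ y, g y ^ q ∂μ :=
    lintegral_prod_mul (hf.pow_const _) (hg.pow_const _)
  calc ∫⁻ x, ∫⁻ y, f x * g y * K (x - y) ∂μ ∂μ
      = ∫⁻ z, f z.1 * g z.2 * K (z.1 - z.2) ∂μ.prod μ :=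
        (lintegral_prod _ ((hf.comp_fst.mul hg.comp_snd).mul hK₂.aemeasurable)).symm
    _ = ∫⁻ z, ∏ i, u i z ^ e i ∂μ.prod μ := lintegral_congr hpt
    _ ≤ ∏ i, (∫⁻ z, u i z ∂μ.prod μ) ^ e i := ENNReal.lintegral_prod_norm_pow_le _ hu he he₀
    _ = _ := by
      simp only [Fin.prod_univ_three, hu₀, hu₁, hu₂, e, Matrix.cons_val_zero, Matrix.cons_val_one,
        Matrix.cons_val_two, Matrix.tail_cons, Matrix.head_cons]
      rw [ENNReal.mul_rpow_mul_rpow_mul_rpow _ _ _ (by linarith) (by linarith) (by linarith)]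
      congr 3 <;> linarith

end Young

section Kernel

variable {E : Type*} [NormedAddCommGroup E]

def nearKernel (R : ℝ) : E → ℝ≥0∞ :=
  (ball 0 R).indicator fun z => ENNReal.ofReal ‖z‖⁻¹

theorem ofReal_inv_norm_le_nearKernel_add {R : ℝ} (hR : 0 < R) (z : E) :
    ENNReal.ofReal ‖z‖⁻¹ ≤ nearKernel R z + ENNReal.ofReal R⁻¹ := by
  by_cases hz : z ∈ ball 0 R
  · simp [nearKernel, hz]
  · rw [nearKernel, Set.indicator_of_notMem hz, zero_add]
    exact ENNReal.ofReal_le_ofReal (inv_anti₀ hR (by simpa using hz))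

variable [MeasurableSpace E] [BorelSpace E]

theorem measurable_nearKernel (R : ℝ) : Measurable (nearKernel R : E → ℝ≥0∞) :=
  (by fun_prop : Measurable fun z : E => ENNReal.ofReal ‖z‖⁻¹).indicator measurableSet_ball

variable [NormedSpace ℝ E] [FiniteDimensional ℝ E] (μ : Measure E) [μ.IsAddHaarMeasure]

theorem setLIntegral_ball_norm_rpow_neg (q : ℝ) {R : ℝ} (hR : 0 < R) :
    ∫⁻ z in ball 0 R, ENNReal.ofReal (‖z‖ ^ (-q)) ∂μ =
      ENNReal.ofReal (R ^ (finrank ℝ E - q)) *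
        ∫⁻ z in ball 0 1, ENNReal.ofReal (‖z‖ ^ (-q)) ∂μ := by
  have hpre : (fun z : E => R • z) ⁻¹' ball 0 R = ball 0 1 := by
    ext z
    simp [norm_smul, abs_of_pos hR, hR]
  have hscale : ∀ z : E, ENNReal.ofReal (‖R • z‖ ^ (-q)) =
      ENNReal.ofReal (R ^ (-q)) * ENNReal.ofReal (‖z‖ ^ (-q)) := fun z => by
    rw [norm_smul, Real.norm_of_nonneg hR.le, Real.mul_rpow hR.le (norm_nonneg z),
      ENNReal.ofReal_mul (by positivity)]
  have hmap := setLIntegral_map (μ := μ) (measurableSet_ball (x := (0 : E)) (ε := R))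
    (by fun_prop : Measurable fun z : E => ENNReal.ofReal (‖z‖ ^ (-q)))
    (measurable_const_smul R)
  have hRd : (0 : ℝ) < R ^ finrank ℝ E := by positivity
  simp_rw [Measure.map_addHaar_smul μ hR.ne', Measure.restrict_smul, lintegral_smul_measure, hpre,
    hscale, smul_eq_mul, abs_of_pos (inv_pos.2 hRd)] at hmap
  rw [lintegral_const_mul _ (by fun_prop)] at hmap
  calc ∫⁻ z in ball 0 R, ENNReal.ofReal (‖z‖ ^ (-q)) ∂μ
      = ENNReal.ofReal (R ^ finrank ℝ E) *
          (ENNReal.ofReal (R ^ finrank ℝ E)⁻¹ *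
            ∫⁻ z in ball 0 R, ENNReal.ofReal (‖z‖ ^ (-q)) ∂μ) := by
        rw [← mul_assoc, ← ENNReal.ofReal_mul hRd.le, mul_inv_cancel₀ hRd.ne', ENNReal.ofReal_one,
          one_mul]
    _ = _ := by
        rw [hmap, ← mul_assoc, ← ENNReal.ofReal_mul hRd.le, ← Real.rpow_natCast,
          ← Real.rpow_add hR, sub_eq_add_neg]

theorem setLIntegral_ball_norm_rpow_neg_lt_top [Nontrivial E] {q : ℝ} (hq : q < finrank ℝ E) :
    ∫⁻ z in ball 0 1, ENNReal.ofReal (‖z‖ ^ (-q)) ∂μ < ∞ :=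
  (integrableOn_ball_of_norm_le_rpow (μ := μ) Module.finrank_pos hq (C := 1)
    (ae_of_all _ fun z => by simp [abs_of_nonneg (Real.rpow_nonneg (norm_nonneg z) _)])
    (by fun_prop : Measurable fun z : E => ‖z‖ ^ (-q)).aestronglyMeasurable).lintegral_lt_top

theorem lintegral_nearKernel_rpow {r R : ℝ} (hr : 0 < r) (hR : 0 < R) :
    ∫⁻ z, nearKernel R z ^ r ∂μ =
      ENNReal.ofReal (R ^ (finrank ℝ E - r)) *
        ∫⁻ z in ball 0 1, ENNReal.ofReal (‖z‖ ^ (-r)) ∂μ := by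
  rw [← setLIntegral_ball_norm_rpow_neg μ r hR, ← lintegral_indicator measurableSet_ball]
  refine lintegral_congr fun z => ?_
  by_cases hz : z ∈ ball 0 R
  · simp only [nearKernel, Set.indicator_of_mem hz]
    rw [ENNReal.ofReal_rpow_of_nonneg (by positivity) hr.le, Real.inv_rpow (norm_nonneg _),
      Real.rpow_neg (norm_nonneg _)]
  · simp [nearKernel, hz, ENNReal.zero_rpow_of_pos hr]

theorem exists_lintegral_lintegral_nearKernel_le [Nontrivial E] {p q r : ℝ} (hp : 1 ≤ p)
    (hq : 1 ≤ q) (hr : 1 ≤ r) (hpqr : p⁻¹ + q⁻¹ + r⁻¹ = 2) (hrE : r < finrank ℝ E) :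
    ∃ c ≥ (0 : ℝ), ∀ f : E → ℝ≥0∞, AEMeasurable f μ → ∀ a b : ℝ, 0 ≤ a → 0 ≤ b →
      ∫⁻ x, f x ^ p ∂μ ≤ ENNReal.ofReal a → ∫⁻ x, f x ^ q ∂μ ≤ ENNReal.ofReal b →
      ∀ R > 0, ∫⁻ x, ∫⁻ y, f x * f y * nearKernel R (x - y) ∂μ ∂μ ≤
        ENNReal.ofReal (a ^ p⁻¹ * b ^ q⁻¹ * (R ^ (finrank ℝ E - r) * c) ^ r⁻¹) := by
  set I := ∫⁻ z in ball 0 1, ENNReal.ofReal (‖z‖ ^ (-r)) ∂μ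
  have hI : I ≠ ∞ := (setLIntegral_ball_norm_rpow_neg_lt_top μ hrE).ne
  refine ⟨I.toReal, ENNReal.toReal_nonneg, fun f hf a b ha hb hfa hfb R hR => ?_⟩
  have hRc : 0 ≤ R ^ (finrank ℝ E - r) * I.toReal := by positivity
  calc ∫⁻ x, ∫⁻ y, f x * f y * nearKernel R (x - y) ∂μ ∂μ
      ≤ (∫⁻ x, f x ^ p ∂μ) ^ p⁻¹ * (∫⁻ x, f x ^ q ∂μ) ^ q⁻¹ *
          (∫⁻ z, nearKernel R z ^ r ∂μ) ^ r⁻¹ :=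
        lintegral_lintegral_mul_mul_sub_le hf hf (measurable_nearKernel R) hp hq hr hpqr
    _ ≤ ENNReal.ofReal a ^ p⁻¹ * ENNReal.ofReal b ^ q⁻¹ *
          ENNReal.ofReal (R ^ (finrank ℝ E - r) * I.toReal) ^ r⁻¹ := by
        rw [lintegral_nearKernel_rpow μ (by linarith) hR, ENNReal.ofReal_mul (by positivity),
          ENNReal.ofReal_toReal hI]
        gcongr
    _ = _ := by
        rw [ENNReal.ofReal_rpow_of_nonneg ha (by positivity),
          ENNReal.ofReal_rpow_of_nonneg hb (by positivity),
          ENNReal.ofReal_rpow_of_nonneg hRc (by positivity), ← ENNReal.ofReal_mul (by positivity),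
          ← ENNReal.ofReal_mul (by positivity)]

end Kernel

theorem ofReal_integral_le_lintegral_ofReal {α : Type*} [MeasurableSpace α] {μ : Measure α}
    {g : α → ℝ} (hg : ∀ x, 0 ≤ g x) :
    ENNReal.ofReal (∫ x, g x ∂μ) ≤ ∫⁻ x, ENNReal.ofReal (g x) ∂μ := by
  by_cases h : Integrable g μ
  · rw [ofReal_integral_eq_lintegral_ofReal h (ae_of_all _ hg)]
  · simp [integral_undef h]

theorem ofReal_integral_integral_div_norm_le {E : Type*} [NormedAddCommGroup E]
    [MeasurableSpace E] {μ : Measure E} {ρ : E → ℝ} (hρ : ∀ x, 0 ≤ ρ x) :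
    ENNReal.ofReal (∫ x, ∫ y, ρ x * ρ y / ‖x - y‖ ∂μ ∂μ) ≤
      ∫⁻ x, ∫⁻ y, ENNReal.ofReal (ρ x) * ENNReal.ofReal (ρ y) * ENNReal.ofReal ‖x - y‖⁻¹ ∂μ ∂μ := by
  have hpt : ∀ x y, 0 ≤ ρ x * ρ y / ‖x - y‖ := fun x y => by
    have := hρ x; have := hρ y; positivity
  refine (ofReal_integral_le_lintegral_ofReal fun x => integral_nonneg (hpt x)).trans
    (lintegral_mono fun x => (ofReal_integral_le_lintegral_ofReal (hpt x)).trans_eq ?_)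
  refine lintegral_congr fun y => ?_
  rw [div_eq_mul_inv, ENNReal.ofReal_mul (mul_nonneg (hρ x) (hρ y)), ENNReal.ofReal_mul (hρ x)]

theorem lintegral_lintegral_mul_mul_le_add {G : Type*} [Sub G] [MeasurableSpace G]
    {μ : Measure G} {f K K' : G → ℝ≥0∞} (hf : AEMeasurable f μ) {c : ℝ≥0∞}
    (hK : ∀ z, K z ≤ K' z + c) :
    ∫⁻ x, ∫⁻ y, f x * f y * K (x - y) ∂μ ∂μ ≤
      ∫⁻ x, ∫⁻ y, f x * f y * K' (x - y) ∂μ ∂μ + (∫⁻ x, f x ∂μ) ^ 2 * c := by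
  have hc : ∀ x, ∫⁻ y, f x * f y * c ∂μ = f x * (∫⁻ y, f y ∂μ) * c := fun x => by
    rw [lintegral_mul_const'' _ (hf.const_mul _), lintegral_const_mul'' _ hf]
  calc ∫⁻ x, ∫⁻ y, f x * f y * K (x - y) ∂μ ∂μ
      ≤ ∫⁻ x, ∫⁻ y, f x * f y * K' (x - y) + f x * f y * c ∂μ ∂μ :=
        lintegral_mono fun x => lintegral_mono fun y => by
          rw [← mul_add]; exact mul_le_mul_right (hK _) _
    _ = ∫⁻ x, ((∫⁻ y, f x * f y * K' (x - y) ∂μ) + f x * (∫⁻ y, f y ∂μ) * c) ∂μ := by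
        refine lintegral_congr fun x => ?_
        rw [lintegral_add_right' _ ((hf.const_mul _).mul_const _), hc]
    _ = _ := by
        rw [lintegral_add_right' _ ((hf.mul_const _).mul_const _), lintegral_mul_const'' _
          (hf.mul_const _), lintegral_mul_const'' _ hf, sq]

theorem le_mul_rpow_of_forall_pos {I A B σ α β γ : ℝ} (hσ : 0 < σ) (hαβ : α - γ * β = γ)
    (h : ∀ R > 0, I ≤ A * σ ^ α * R ^ β + B * R⁻¹) : I ≤ (A + B) * σ ^ γ := by
  have := h (σ ^ (-γ)) (Real.rpow_pos_of_pos hσ _)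
  rwa [← Real.rpow_mul hσ.le, mul_assoc, ← Real.rpow_add hσ, Real.rpow_neg hσ.le, inv_inv,
    show α + -γ * β = γ by linarith, ← add_mul] at this

theorem exists_le_sub_mul_rpow {c θ : ℝ} (hc : 0 ≤ c) (hθ₀ : 0 ≤ θ) (hθ₁ : θ < 1) :
    ∃ m, ∀ s, 0 ≤ s → m ≤ s - c * s ^ θ := by
  refine ⟨-c ^ (1 - θ)⁻¹, fun s hs => ?_⟩
  -- weighted AM-GM: `s ^ θ * K ^ (1 - θ) ≤ θ s + (1 - θ) K` with `K ^ (1 - θ) = c`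
  have hK : (c ^ (1 - θ)⁻¹) ^ (1 - θ) = c := by
    rw [← Real.rpow_mul hc, inv_mul_cancel₀ (by linarith), Real.rpow_one]
  have := Real.geom_mean_le_arith_mean2_weighted (w₂ := 1 - θ) (p₂ := c ^ (1 - θ)⁻¹) hθ₀
    (by linarith) hs (Real.rpow_nonneg hc _) (by ring)
  rw [hK] at this
  nlinarith [Real.rpow_nonneg hc (1 - θ)⁻¹]

theorem exists_lintegral_lintegral_nearKernel_le_rpow {n : ℝ} (hn : 0 < n) (hn₃ : n < 3)
    {M κ : ℝ} (hM : 0 ≤ M) (hκ : 0 ≤ κ) :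
    ∃ A ≥ (0 : ℝ), ∃ α β : ℝ, α - n / 3 * β = n / 3 ∧
      ∀ f : Space → ℝ≥0∞, AEMeasurable f → ∫⁻ x, f x = ENNReal.ofReal M →
      ∀ σ > 0, ∫⁻ x, f x ^ (1 + 1 / n) ≤ ENNReal.ofReal (κ * σ) →
      ∀ R > 0, ∫⁻ x, ∫⁻ y, f x * f y * nearKernel R (x - y) ≤
        ENNReal.ofReal (A * σ ^ α * R ^ β) := by
  have hd : (finrank ℝ Space : ℝ) = 3 := by simp
  have hq : (1 + 1 / n)⁻¹ = n / (n + 1) := by field_simp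
  rcases lt_or_ge n 2 with hn₂ | hn₂
  -- Young exponents `(1, 1 + 1/n, n + 1)`: `|z|^{-(n+1)}` is integrable near `0` only if `n < 2`
  · obtain ⟨c, hc, hnear⟩ := exists_lintegral_lintegral_nearKernel_le (volume : Measure Space)
      le_rfl (q := 1 + 1 / n) (r := n + 1) (by simp [hn.le]) (by linarith)
      (by rw [hq]; field_simp; ring) (by rw [hd]; linarith)
    refine ⟨M * κ ^ (n / (n + 1)) * c ^ (n + 1)⁻¹, by positivity, n / (n + 1),
      (3 - (n + 1)) * (n + 1)⁻¹, by field_simp; ring, fun f hf hfM σ hσ hfT R hR => ?_⟩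
    refine (hnear f hf M (κ * σ) hM (by positivity) (by simp [hfM]) hfT R hR).trans_eq ?_
    rw [hd, hq, inv_one, Real.rpow_one, Real.mul_rpow hκ hσ.le, Real.mul_rpow (by positivity) hc,
      ← Real.rpow_mul hR.le]
    ring_nf
  -- Young exponents `(1 + 1/n, 1 + 1/n, (n + 1)/2)`, admissible once `n ≥ 1`
  · obtain ⟨c, hc, hnear⟩ := exists_lintegral_lintegral_nearKernel_le (volume : Measure Space)
      (p := 1 + 1 / n) (q := 1 + 1 / n) (r := (n + 1) / 2) (by simp [hn.le]) (by simp [hn.le])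
      (by linarith) (by rw [hq]; field_simp; ring) (by rw [hd]; linarith)
    refine ⟨κ ^ (n / (n + 1)) * κ ^ (n / (n + 1)) * c ^ ((n + 1) / 2)⁻¹, by positivity,
      n / (n + 1) + n / (n + 1), (3 - (n + 1) / 2) * ((n + 1) / 2)⁻¹, by field_simp; ring,
      fun f hf _ σ hσ hfT R hR => ?_⟩
    refine (hnear f hf (κ * σ) (κ * σ) (by positivity) (by positivity) hfT hfT R hR).trans_eq ?_
    rw [hd, hq, Real.mul_rpow hκ hσ.le, Real.mul_rpow (by positivity) hc, ← Real.rpow_mul hR.le,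
      Real.rpow_add hσ]
    ring_nf

namespace PhiHyp

variable {Φ Φ' : ℝ → ℝ} {n n' : ℝ}

theorem nonneg (hΦ : PhiHyp Φ Φ' n n') {r : ℝ} (hr : 0 ≤ r) : 0 ≤ Φ r := by
  rcases hr.eq_or_lt with rfl | hr
  · exact hΦ.zero.ge
  have := hΦ.strictConvex.convexOn.le_slope_of_hasDerivWithinAt Set.self_mem_Ici hr.le hr
    (hΦ.hasDeriv 0 Set.self_mem_Ici)
  rw [hΦ.derivZero, slope_def_field, hΦ.zero, sub_zero, sub_zero] at this
  exact (div_nonneg_iff.1 this).elim (·.1) fun h => absurd h.2 (not_le.2 hr)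

theorem exists_rpow_le (hΦ : PhiHyp Φ Φ' n n') :
    ∃ a ≥ (0 : ℝ), ∃ b ≥ (0 : ℝ), ∀ r, 0 ≤ r → r ^ (1 + 1 / n) ≤ a * r + b * Φ r := by
  obtain ⟨C, hC, r₁, hgrowth⟩ := hΦ.growth
  have hn := hΦ.n_pos
  refine ⟨max r₁ 0 ^ (1 / n), by positivity, C⁻¹, by positivity, fun r hr => ?_⟩
  have hΦr := hΦ.nonneg hr
  rcases le_total r (max r₁ 0) with h | h
  · have : r ^ (1 / n) ≤ max r₁ 0 ^ (1 / n) := Real.rpow_le_rpow hr h (by positivity)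
    rw [Real.rpow_add' hr (by positivity), Real.rpow_one]
    nlinarith [mul_nonneg (inv_nonneg.2 hC.le) hΦr]
  · have := hgrowth r ((le_max_left _ _).trans h)
    rw [← le_inv_mul_iff₀ hC] at this
    nlinarith [mul_nonneg (Real.rpow_nonneg (le_max_right r₁ 0) (1 / n)) hr]

theorem lintegral_rpow_le (hΦ : PhiHyp Φ Φ' n n') :
    ∃ a ≥ (0 : ℝ), ∃ b ≥ (0 : ℝ), ∀ M, ∀ ρ ∈ FMr Φ M,
      ∫⁻ x, ENNReal.ofReal (ρ x) ^ (1 + 1 / n) ≤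
        ENNReal.ofReal (a * M + b * ∫ x, Φ (ρ x)) := by
  obtain ⟨a, ha, b, hb, hpt⟩ := hΦ.exists_rpow_le
  have hn := hΦ.n_pos
  refine ⟨a, ha, b, hb, fun M ρ ⟨hρ₀, hρ, hΦρ, hM⟩ => ?_⟩
  have hint : Integrable (fun x => a * ρ x + b * Φ (ρ x)) :=
    (hρ.const_mul a).add (hΦρ.const_mul b)
  calc ∫⁻ x, ENNReal.ofReal (ρ x) ^ (1 + 1 / n)
      ≤ ∫⁻ x, ENNReal.ofReal (a * ρ x + b * Φ (ρ x)) := lintegral_mono fun x => by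
        rw [ENNReal.ofReal_rpow_of_nonneg (hρ₀ x) (by positivity)]
        exact ENNReal.ofReal_le_ofReal (hpt _ (hρ₀ x))
    _ = ENNReal.ofReal (a * M + b * ∫ x, Φ (ρ x)) := by
        rw [← ofReal_integral_eq_lintegral_ofReal hint (ae_of_all _ fun x =>
          add_nonneg (mul_nonneg ha (hρ₀ x)) (mul_nonneg hb (hΦ.nonneg (hρ₀ x)))),
          integral_add (hρ.const_mul a) (hΦρ.const_mul b), integral_const_mul,
          integral_const_mul, hM]

theorem exists_integral_integral_div_norm_le (hΦ : PhiHyp Φ Φ' n n') {M : ℝ} (hM : 0 < M) :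
    ∃ C > (0 : ℝ), ∀ ρ ∈ FMr Φ M,
      ∫ x, ∫ y, ρ x * ρ y / ‖x - y‖ ≤ C * (1 + (∫ x, Φ (ρ x)) ^ (n / 3)) := by
  have hn := hΦ.n_pos
  obtain ⟨a, ha, b, hb, hT⟩ := hΦ.lintegral_rpow_le
  obtain ⟨A, hA, α, β, hαβ, hnear⟩ := exists_lintegral_lintegral_nearKernel_le_rpow hn
    hΦ.n_lt_three hM.le (κ := a * M + b) (by positivity)
  refine ⟨A + M ^ 2, by positivity, fun ρ hρ => ?_⟩
  have hT := hT M ρ hρ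
  obtain ⟨hρ₀, hρ, -, hρM⟩ := hρ
  set S := ∫ x, Φ (ρ x)
  have hS : 0 ≤ S := integral_nonneg fun x => hΦ.nonneg (hρ₀ x)
  have hf : AEMeasurable fun x => ENNReal.ofReal (ρ x) := hρ.aemeasurable.ennreal_ofReal
  have hfM : ∫⁻ x, ENNReal.ofReal (ρ x) = ENNReal.ofReal M := by
    rw [← ofReal_integral_eq_lintegral_ofReal hρ (ae_of_all _ hρ₀), hρM]
  have hfT : ∫⁻ x, ENNReal.ofReal (ρ x) ^ (1 + 1 / n) ≤ ENNReal.ofReal ((a * M + b) * (1 + S)) :=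
    hT.trans (ENNReal.ofReal_le_ofReal (by nlinarith [mul_nonneg (mul_nonneg ha hM.le) hS]))
  have hR : ∀ R > 0, ∫ x, ∫ y, ρ x * ρ y / ‖x - y‖ ≤
      A * (1 + S) ^ α * R ^ β + M ^ 2 * R⁻¹ := fun R hR => by
    rw [← ENNReal.ofReal_le_ofReal_iff (by positivity), ENNReal.ofReal_add (by positivity)
      (by positivity), ENNReal.ofReal_mul (p := M ^ 2) (by positivity), ENNReal.ofReal_pow hM.le,
      ← hfM]
    exact (ofReal_integral_integral_div_norm_le hρ₀).trans
      ((lintegral_lintegral_mul_mul_le_add hf (ofReal_inv_norm_le_nearKernel_add hR)).trans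
        (add_le_add_left (hnear _ hf hfM _ (by positivity) hfT R hR) _))
  calc ∫ x, ∫ y, ρ x * ρ y / ‖x - y‖
      ≤ (A + M ^ 2) * (1 + S) ^ (n / 3) := le_mul_rpow_of_forall_pos (by positivity) hαβ hR
    _ ≤ (A + M ^ 2) * (1 + S ^ (n / 3)) := by
        gcongr
        simpa using Real.rpow_add_le_add_rpow zero_le_one hS (by positivity)
          (by linarith [hΦ.n_lt_three])

end PhiHyp

/-- There are constants `C₁, C₂ > 0` such that
`H_C^r(ρ) ≥ ∫ Φ(ρ) - C₁ - C₂ (∫ Φ(ρ))^{n/3}` for all `ρ ∈ F_M^r`; in particular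
`h_M^r > -∞`, i.e. `H_C^r` is bounded from below on `F_M^r`. -/
theorem HCr_lower_bound (Φ Φ' : ℝ → ℝ) (n n' : ℝ) (hΦ : PhiHyp Φ Φ' n n')
    (M : ℝ) (hM : 0 < M) :
    (∃ C₁ > (0:ℝ), ∃ C₂ > (0:ℝ), ∀ ρ ∈ FMr Φ M,
      (∫ x : Space, Φ (ρ x)) - C₁ - C₂ * (∫ x : Space, Φ (ρ x)) ^ (n/3) ≤ HCr Φ ρ) ∧
    BddBelow (HCr Φ '' FMr Φ M) := by
  obtain ⟨C, hC, hcoulomb⟩ := hΦ.exists_integral_integral_div_norm_le hM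
  have hbound : ∀ ρ ∈ FMr Φ M,
      (∫ x, Φ (ρ x)) - C / 2 - C / 2 * (∫ x, Φ (ρ x)) ^ (n / 3) ≤ HCr Φ ρ := fun ρ hρ => by
    rw [HCr, Epot]
    linarith [hcoulomb ρ hρ]
  obtain ⟨m, hm⟩ := exists_le_sub_mul_rpow (c := C / 2) (θ := n / 3) (by positivity)
    (by linarith [hΦ.n_pos]) (by linarith [hΦ.n_lt_three])
  refine ⟨⟨C / 2, by positivity, C / 2, by positivity, hbound⟩, m - C / 2, ?_⟩
  rintro _ ⟨ρ, hρ, rfl⟩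
  have := hm (∫ x, Φ (ρ x)) (integral_nonneg fun x => hΦ.nonneg (hρ.1 x))
  linarith [hbound ρ hρ]
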